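/- arXiv:2011.00548 — 3 statements merged into one kernel-verified Lean document; each statement's English description precedes it below -/
import Mathlib

section
/- Let α < 0 be real. For K ≥ 2, r > 0 and c, c' ∈ ℝ, define I_K(r; c, c') = ∫_r^{Kr} (c·s^α + c'·s^α·log s)²·s^{−1} ds. Then there exists K₁ ≥ 2, depending only on α, such that for every K ≥ K₁, every r > 0, and every pair (c, c') ≠ (0, 0), one has I_K(Kr; c, c') < I_K(r; c, c'). -/
/-!
In the variable `u = log s` the mass of the mode on `[r, K r]` becomes
`∫ (c + c' u)² e^{2αu} du` over an interval of length `L = log K`, and moving to the next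
annulus shifts `u` by `L`. The shift multiplies the weight by `e^{2αL}` and replaces `c` by
`c + c' L`; the extra term `(c' L)² ∫ e^{2αu}` is controlled by the mass itself, because
`∫ (c + c' u)²` over an interval of length `L` is at least `c'² L³ / 12` (the variance of the
uniform distribution), while the weight is at least its value at the right endpoint. Altogether the next mass is at most `(2 e^{2αL} + 12 / (-α L))`
times the current one, and this factor is below `1` once `-α L ≥ 24`.
-/

open MeasureTheory Set Real

theorem integral_sq_affine (c c' a b : ℝ) :
    ∫ u in a..b, (c + c' * u) ^ 2 =
      (b - a) * ((c + c' * ((a + b) / 2)) ^ 2 + c' ^ 2 * (b - a) ^ 2 / 12) := by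
  have hderiv : ∀ u ∈ uIcc a b, HasDerivAt
      (fun u => c ^ 2 * u + c * c' * u ^ 2 + c' ^ 2 * u ^ 3 / 3) ((c + c' * u) ^ 2) u := by
    intro u _
    refine ((((hasDerivAt_id' u).const_mul (c ^ 2)).add
      ((hasDerivAt_pow 2 u).const_mul (c * c'))).add
      (((hasDerivAt_pow 3 u).const_mul (c' ^ 2)).div_const 3)).congr_deriv ?_
    push_cast
    ring
  rw [intervalIntegral.integral_eq_sub_of_hasDerivAt hderiv
    ((by fun_prop : Continuous fun u => (c + c' * u) ^ 2).intervalIntegrable _ _)]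
  ring

theorem integral_exp_mul_le_of_neg {α : ℝ} (hα : α < 0) (a b : ℝ) :
    ∫ u in a..b, exp (α * u) ≤ exp (α * a) / -α := by
  rw [intervalIntegral.integral_comp_mul_left (fun u => exp u) hα.ne, integral_exp, smul_eq_mul,
    inv_mul_eq_div, ← neg_div_neg_eq, neg_sub]
  exact div_le_div_of_nonneg_right (by linarith [exp_pos (α * b)]) (by linarith)

noncomputable def logModeMass (α c c' a b : ℝ) : ℝ :=
  ∫ u in a..b, (c + c' * u) ^ 2 * exp (2 * α * u)

theorem setIntegral_Ioc_eq_logModeMass (α c c' : ℝ) {r R : ℝ} (hr : 0 < r) (hrR : r ≤ R) :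
    ∫ s in Ioc r R, (c * s ^ α + c' * s ^ α * log s) ^ 2 * s⁻¹ =
      logModeMass α c c' (log r) (log R) := by
  have hcont : ContinuousOn (fun s : ℝ => (c * s ^ α + c' * s ^ α * log s) ^ 2 * s⁻¹)
      (exp '' uIcc (log r) (log R)) := by
    have : ∀ s ∈ exp '' uIcc (log r) (log R), s ≠ 0 := by
      rintro _ ⟨u, _, rfl⟩
      exact (exp_pos u).ne'
    fun_prop (disch := assumption)
  have h := intervalIntegral.integral_comp_mul_deriv' (fun u _ => hasDerivAt_exp u)
    continuousOn_exp hcont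
  rw [exp_log hr, exp_log (hr.trans_le hrR)] at h
  rw [← intervalIntegral.integral_of_le hrR, ← h, logModeMass]
  refine intervalIntegral.integral_congr fun u _ => ?_
  simp only [Function.comp_apply, rpow_def_of_pos (exp_pos u), log_exp]
  rw [show 2 * α * u = u * α + u * α by ring, exp_add]
  field_simp

namespace logModeMass

theorem intervalIntegrable (α c c' a b : ℝ) :
    IntervalIntegrable (fun u => (c + c' * u) ^ 2 * exp (2 * α * u)) volume a b :=
  (by fun_prop : Continuous fun u => (c + c' * u) ^ 2 * exp (2 * α * u)).intervalIntegrable _ _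

variable {α : ℝ} (c c' : ℝ) {a b : ℝ}

theorem shift_eq (L : ℝ) :
    logModeMass α c c' (a + L) (b + L) = exp (2 * α * L) * logModeMass α (c + c' * L) c' a b := by
  rw [logModeMass, ← intervalIntegral.integral_comp_add_right, logModeMass,
    ← intervalIntegral.integral_const_mul]
  congr 1
  ext u
  rw [show 2 * α * (u + L) = 2 * α * u + 2 * α * L by ring, exp_add]
  ring

theorem add_coeff_le (hα : α < 0) (hab : a ≤ b) (d : ℝ) :
    logModeMass α (c + d) c' a b ≤ 2 * logModeMass α c c' a b + d ^ 2 * exp (2 * α * a) / -α := by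
  have hw : Continuous fun u => exp (2 * α * u) := by fun_prop
  have hmono : logModeMass α (c + d) c' a b ≤
      ∫ u in a..b, (2 * ((c + c' * u) ^ 2 * exp (2 * α * u)) + 2 * d ^ 2 * exp (2 * α * u)) := by
    refine intervalIntegral.integral_mono_on hab (intervalIntegrable α _ c' a b)
      (((intervalIntegrable α c c' a b).const_mul 2).add ((hw.intervalIntegrable a b).const_mul _))
      fun u _ => ?_
    have hsq : (c + d + c' * u) ^ 2 ≤ 2 * (c + c' * u) ^ 2 + 2 * d ^ 2 := by
      nlinarith [sq_nonneg (c + c' * u - d)]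
    nlinarith [exp_pos (2 * α * u)]
  calc logModeMass α (c + d) c' a b
      ≤ ∫ u in a..b, (2 * ((c + c' * u) ^ 2 * exp (2 * α * u)) + 2 * d ^ 2 * exp (2 * α * u)) :=
        hmono
    _ = 2 * logModeMass α c c' a b + 2 * d ^ 2 * ∫ u in a..b, exp (2 * α * u) := by
        rw [intervalIntegral.integral_add ((intervalIntegrable α c c' a b).const_mul 2)
            ((hw.intervalIntegrable a b).const_mul _),
          intervalIntegral.integral_const_mul, intervalIntegral.integral_const_mul]
        rfl
    _ ≤ 2 * logModeMass α c c' a b + 2 * d ^ 2 * (exp (2 * α * a) / -(2 * α)) := by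
        gcongr
        exact integral_exp_mul_le_of_neg (by linarith) a b
    _ = 2 * logModeMass α c c' a b + d ^ 2 * exp (2 * α * a) / -α := by
        field_simp

theorem exp_mul_sq_affine_le (hα : α ≤ 0) (hab : a ≤ b) :
    exp (2 * α * b) * ((b - a) * ((c + c' * ((a + b) / 2)) ^ 2 + c' ^ 2 * (b - a) ^ 2 / 12)) ≤
      logModeMass α c c' a b := by
  rw [← integral_sq_affine, ← intervalIntegral.integral_const_mul]
  refine intervalIntegral.integral_mono_on hab
    ((by fun_prop : Continuous fun u => (c + c' * u) ^ 2).intervalIntegrable _ _ |>.const_mul _)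
    (intervalIntegrable α c c' a b) fun u hu => ?_
  rw [mul_comm]
  exact mul_le_mul_of_nonneg_left (exp_le_exp.mpr (by nlinarith [hu.2])) (sq_nonneg _)

theorem pos (hα : α ≤ 0) (hab : a < b) (hcc : (c, c') ≠ (0, 0)) :
    0 < logModeMass α c c' a b := by
  refine lt_of_lt_of_le ?_ (exp_mul_sq_affine_le c c' hα hab.le)
  have hba := sub_pos.mpr hab
  have hbracket : 0 < (c + c' * ((a + b) / 2)) ^ 2 + c' ^ 2 * (b - a) ^ 2 / 12 := by
    rcases eq_or_ne c' 0 with rfl | hc'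
    · have hc : c ≠ 0 := fun hc => hcc (by rw [hc])
      simpa using sq_pos_of_ne_zero hc
    · have : 0 < (b - a) ^ 2 := by positivity
      positivity
  positivity

theorem shift_lt (hα : α < 0) {L : ℝ} (hL : 24 ≤ -α * L) (hcc : (c, c') ≠ (0, 0)) (a : ℝ) :
    logModeMass α c c' (a + L) (a + L + L) < logModeMass α c c' a (a + L) := by
  have hL0 : 0 < L := pos_of_mul_pos_right (by linarith) (neg_pos.mpr hα).le
  set D := logModeMass α c c' a (a + L)
  have hD : 0 < D := pos c c' hα.le (by linarith) hcc
  set E := exp (2 * α * L)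
  set X := exp (2 * α * a) * E * c' ^ 2 * L ^ 2
  have hlow : X * L / 12 ≤ D := by
    refine le_trans ?_ (exp_mul_sq_affine_le c c' hα.le (by linarith : a ≤ a + L))
    rw [mul_add, exp_add, add_sub_cancel_left]
    have := sq_nonneg (c + c' * ((a + (a + L)) / 2))
    have : 0 ≤ exp (2 * α * a) * E * L := by positivity
    nlinarith
  have hcorr : X / -α ≤ D / 2 := by
    rw [div_le_iff₀ (neg_pos.mpr hα)]
    nlinarith [(by positivity : 0 ≤ X)]
  have hE : E ≤ 1 / 49 := by
    have h49 : 49 ≤ exp (-(2 * α * L)) := by linarith [add_one_le_exp (-(2 * α * L))]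
    have : E * exp (-(2 * α * L)) = 1 := by rw [← exp_add, add_neg_cancel, exp_zero]
    nlinarith [exp_pos (2 * α * L)]
  calc logModeMass α c c' (a + L) (a + L + L)
      ≤ E * (2 * D + (c' * L) ^ 2 * exp (2 * α * a) / -α) := by
        rw [shift_eq c c' L]
        exact mul_le_mul_of_nonneg_left (add_coeff_le c c' hα (by linarith) _) (exp_pos _).le
    _ = 2 * (E * D) + X / -α := by ring
    _ ≤ 2 * (D / 49) + D / 2 := by nlinarith
    _ < D := by linarith

end logModeMass

/-- Claim 1 in Lemma 2.9: for `α < 0` there is `K₁ ≥ 2` (depending only on `α`)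
such that for all `K ≥ K₁`, `r > 0` and `(c, c') ≠ (0, 0)`, the weighted mass
`I_K(r; c, c') = ∫_r^{Kr} (c s^α + c' s^α log s)² s⁻¹ ds` satisfies
`I_K(Kr; c, c') < I_K(r; c, c')`. -/
theorem log_mode_annulus_monotonicity (α : ℝ) (hα : α < 0) :
    ∃ K₁ : ℝ, 2 ≤ K₁ ∧ ∀ K : ℝ, K₁ ≤ K → ∀ r : ℝ, 0 < r → ∀ c c' : ℝ,
      (c, c') ≠ (0, 0) →
      (∫ s in Ioc (K * r) (K * (K * r)),
          (c * s ^ α + c' * s ^ α * Real.log s) ^ 2 * s⁻¹)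
        < ∫ s in Ioc r (K * r),
            (c * s ^ α + c' * s ^ α * Real.log s) ^ 2 * s⁻¹ := by
  refine ⟨max 2 (exp (24 / -α)), le_max_left _ _, fun K hK r hr c c' hcc => ?_⟩
  have hK1 : 1 ≤ K := by linarith [le_max_left 2 (exp (24 / -α))]
  have hK0 : 0 < K := by linarith
  have hlogK : 24 ≤ -α * log K := by
    have := (le_log_iff_exp_le hK0).mpr ((le_max_right _ _).trans hK)
    rwa [div_le_iff₀' (neg_pos.mpr hα)] at this
  have hrK : r ≤ K * r := le_mul_of_one_le_left hr.le hK1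
  rw [setIntegral_Ioc_eq_logModeMass α c c' (hr.trans_le hrK) (le_mul_of_one_le_left
      (hr.trans_le hrK).le hK1), setIntegral_Ioc_eq_logModeMass α c c' hr hrK,
    log_mul hK0.ne' (mul_pos hK0 hr).ne', log_mul hK0.ne' hr.ne']
  convert logModeMass.shift_lt c c' hα hlogK hcc (log r) using 2 <;> ring
end

section
/- Let α < β < 0 be real. For K ≥ 2, r > 0 and c, c' ∈ ℝ, define Ĩ_K(r; c, c') = ∫_r^{Kr} (c·s^α + c'·s^β)²·s^{−1} ds. Then there exists K₂ ≥ 2, depending only on α and β, such that for every K ≥ K₂, every r > 0, and every (c, c') ≠ (0, 0), one has Ĩ_K(Kr; c, c') < Ĩ_K(r; c, c'). -/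
open MeasureTheory Set Real

lemma ioc_integral_rpow {a b γ : ℝ} (ha : 0 < a) (hab : a ≤ b) (hγ : γ ≠ 0) :
    ∫ s in Ioc a b, s ^ (γ - 1) = (b ^ γ - a ^ γ) / γ := by
  rw [← intervalIntegral.integral_of_le hab]
  rw [integral_rpow (Or.inr ⟨by intro h; apply hγ; linarith, by
    simp only [Set.mem_uIcc]; push_neg
    constructor <;> intro h <;> nlinarith⟩)]
  ring_nf

lemma pt_expand {α β c c' s : ℝ} (hs : 0 < s) :
    (c * s ^ α + c' * s ^ β) ^ 2 * s⁻¹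
      = c ^ 2 * s ^ (2 * α - 1) + 2 * c * c' * s ^ (α + β - 1) + c' ^ 2 * s ^ (2 * β - 1) := by
  have h1 : s ^ (2 * α - 1) = s ^ α * s ^ α * s⁻¹ := by
    rw [show 2 * α - 1 = α + α + (-1) by ring, rpow_add hs, rpow_add hs, rpow_neg_one]
  have h2 : s ^ (α + β - 1) = s ^ α * s ^ β * s⁻¹ := by
    rw [show α + β - 1 = α + β + (-1) by ring, rpow_add hs, rpow_add hs, rpow_neg_one]
  have h3 : s ^ (2 * β - 1) = s ^ β * s ^ β * s⁻¹ := by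
    rw [show 2 * β - 1 = β + β + (-1) by ring, rpow_add hs, rpow_add hs, rpow_neg_one]
  rw [h1, h2, h3]; ring

lemma integral_expand {α β : ℝ} (c c' u K : ℝ) (hu : 0 < u) (hK : 1 ≤ K)
    (h2α : 2 * α ≠ 0) (hab : α + β ≠ 0) (h2β : 2 * β ≠ 0) :
    ∫ s in Ioc u (K * u), (c * s ^ α + c' * s ^ β) ^ 2 * s⁻¹
      = c ^ 2 * (((K * u) ^ (2 * α) - u ^ (2 * α)) / (2 * α))
        + 2 * c * c' * (((K * u) ^ (α + β) - u ^ (α + β)) / (α + β))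
        + c' ^ 2 * (((K * u) ^ (2 * β) - u ^ (2 * β)) / (2 * β)) := by
  have hKu : u ≤ K * u := le_mul_of_one_le_left hu.le hK
  have h0 : (0 : ℝ) ∉ Set.uIcc u (K * u) := by
    rw [Set.uIcc_of_le hKu]; intro h; exact absurd h.1 (by linarith)
  have hint : ∀ γ : ℝ, IntegrableOn (fun s => s ^ (γ - 1)) (Ioc u (K * u)) := fun γ =>
    (intervalIntegrable_iff_integrableOn_Ioc_of_le hKu).mp
      (intervalIntegral.intervalIntegrable_rpow (Or.inr h0))
  have hA : IntegrableOn (fun s => c ^ 2 * s ^ (2 * α - 1)) (Ioc u (K * u)) :=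
    (hint _).const_mul _
  have hB : IntegrableOn (fun s => 2 * c * c' * s ^ (α + β - 1)) (Ioc u (K * u)) :=
    (hint _).const_mul _
  have hC : IntegrableOn (fun s => c' ^ 2 * s ^ (2 * β - 1)) (Ioc u (K * u)) :=
    (hint _).const_mul _
  have hAB : IntegrableOn
      (fun s => c ^ 2 * s ^ (2 * α - 1) + 2 * c * c' * s ^ (α + β - 1)) (Ioc u (K * u)) :=
    hA.add hB
  rw [setIntegral_congr_fun measurableSet_Ioc (fun s hs => pt_expand (hu.trans hs.1))]
  rw [integral_add hAB hC, integral_add hA hB,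
    MeasureTheory.integral_const_mul, MeasureTheory.integral_const_mul, MeasureTheory.integral_const_mul,
    ioc_integral_rpow hu hKu h2α, ioc_integral_rpow hu hKu hab, ioc_integral_rpow hu hKu h2β]

lemma quad_pos {a b d c c' : ℝ} (ha : 0 < a) (h : b ^ 2 < a * d)
    (hcc : c ≠ 0 ∨ c' ≠ 0) : 0 < a * c ^ 2 + 2 * b * c * c' + d * c' ^ 2 := by
  rcases eq_or_ne c' 0 with h' | h'
  · have hc : c ≠ 0 := hcc.resolve_right (by simp [h'])
    have : 0 < c ^ 2 := by positivity
    subst h'; nlinarith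
  · have h1 : 0 < c' ^ 2 := by positivity
    nlinarith [sq_nonneg (a * c + b * c'), mul_pos (sub_pos.mpr h) h1]

set_option maxHeartbeats 1000000 in
lemma core_ineq {α β p q t rP rQ rR c c' : ℝ} (hα : α < 0) (hβ : β < 0)
    (hp0 : 0 < p) (hpq : p < q) (hq1 : q < 1) (ht0 : 0 < t) (ht1 : t < 1)
    (hrP0 : 0 < rP) (hrQ0 : 0 < rQ) (hrR0 : 0 < rR) (hrr : rP * rR = rQ ^ 2)
    (hkey2 : 4 * (α * β) < (1 - t) ^ 2 * (α + β) ^ 2)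
    (hcc' : c ≠ 0 ∨ c' ≠ 0) :
    c ^ 2 * ((p * (p * rP) - p * rP) / (2 * α))
        + 2 * c * c' * ((q * (q * rQ) - q * rQ) / (α + β))
        + c' ^ 2 * ((t * (t * rR) - t * rR) / (2 * β))
      < c ^ 2 * ((p * rP - rP) / (2 * α)) + 2 * c * c' * ((q * rQ - rQ) / (α + β))
        + c' ^ 2 * ((t * rR - rR) / (2 * β)) := by
  have hQ2 : 0 < (α + β) ^ 2 := by nlinarith
  set a := (1 - p) * (p - 1) * rP / (2 * α) with hadef
  set b := (1 - q) * (q - 1) * rQ / (α + β) with hbdef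
  set d := (1 - t) * (t - 1) * rR / (2 * β) with hddef
  have hp1 : p < 1 := hpq.trans hq1
  have ha : 0 < a := div_pos_of_neg_of_neg
    (by nlinarith [mul_pos (mul_pos (show (0:ℝ) < 1 - p by linarith)
      (show (0:ℝ) < 1 - p by linarith)) hrP0]) (by nlinarith)
  have hαβpos : 0 < 4 * (α * β) := by nlinarith
  have key : (1 - q) ^ 4 * ((2 * α) * (2 * β))
      < (1 - p) ^ 2 * ((1 - t) ^ 2 * (α + β) ^ 2) := by
    have hu1 : (1 - q) ^ 2 ≤ 1 := by nlinarith
    have hA1 : (1 - q) ^ 4 ≤ (1 - q) ^ 2 := by nlinarith [sq_nonneg (1 - q)]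
    have hA2 : (1 - q) ^ 2 < (1 - p) ^ 2 := by nlinarith
    nlinarith [mul_le_mul_of_nonneg_right hA1 hαβpos.le,
      mul_lt_mul_of_pos_right hA2 hαβpos,
      mul_lt_mul_of_pos_left hkey2 (show (0:ℝ) < (1 - p) ^ 2 by nlinarith)]
  have hbad : b ^ 2 < a * d := by
    have hb2 : b ^ 2 = (1 - q) ^ 4 * rQ ^ 2 / (α + β) ^ 2 := by
      rw [hbdef, div_pow]; congr 1 <;> ring
    have had : a * d = (1 - p) ^ 2 * (1 - t) ^ 2 * rQ ^ 2 / ((2 * α) * (2 * β)) := by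
      rw [hadef, hddef, div_mul_div_comm,
        show (1 - p) * (p - 1) * rP * ((1 - t) * (t - 1) * rR)
          = (1 - p) ^ 2 * (1 - t) ^ 2 * (rP * rR) by ring, hrr]
    have hden : (0 : ℝ) < (2 * α) * (2 * β) := by nlinarith
    rw [hb2, had, div_lt_div_iff₀ hQ2 hden]
    nlinarith [mul_lt_mul_of_pos_right key (pow_pos hrQ0 2)]
  rw [← sub_pos]
  have hPne : (2 : ℝ) * α ≠ 0 := by intro h; nlinarith
  have hQne : α + β ≠ 0 := by intro h; nlinarith
  have hRne : (2 : ℝ) * β ≠ 0 := by intro h; nlinarith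
  have hiden :
      (c ^ 2 * ((p * rP - rP) / (2 * α)) + 2 * c * c' * ((q * rQ - rQ) / (α + β))
          + c' ^ 2 * ((t * rR - rR) / (2 * β)))
        - (c ^ 2 * ((p * (p * rP) - p * rP) / (2 * α))
          + 2 * c * c' * ((q * (q * rQ) - q * rQ) / (α + β))
          + c' ^ 2 * ((t * (t * rR) - t * rR) / (2 * β)))
        = a * c ^ 2 + 2 * b * c * c' + d * c' ^ 2 := by
    rw [hadef, hbdef, hddef]
    field_simp
    ring
  rw [hiden]
  exact quad_pos ha hbad hcc'

set_option maxHeartbeats 1000000 in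
/-- Claim 2 in Lemma 2.9: for `α < β < 0` there is `K₂ ≥ 2` (depending only on
`α, β`) such that for all `K ≥ K₂`, `r > 0` and `(c, c') ≠ (0, 0)`, the weighted
mass `Ĩ_K(r; c, c') = ∫_r^{Kr} (c s^α + c' s^β)² s⁻¹ ds` satisfies
`Ĩ_K(Kr; c, c') < Ĩ_K(r; c, c')`. -/
theorem two_mode_annulus_monotonicity (α β : ℝ) (hαβ : α < β) (hβ : β < 0) :
    ∃ K₂ : ℝ, 2 ≤ K₂ ∧ ∀ K : ℝ, K₂ ≤ K → ∀ r : ℝ, 0 < r → ∀ c c' : ℝ,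
      (c, c') ≠ (0, 0) →
      (∫ s in Ioc (K * r) (K * (K * r)),
          (c * s ^ α + c' * s ^ β) ^ 2 * s⁻¹)
        < ∫ s in Ioc r (K * r),
            (c * s ^ α + c' * s ^ β) ^ 2 * s⁻¹ := by
  have hα : α < 0 := hαβ.trans hβ
  set ρ : ℝ := 4 * (α * β) / (α + β) ^ 2 with hρdef
  have hQ2 : 0 < (α + β) ^ 2 := by nlinarith
  have hρ0 : 0 < ρ := by apply div_pos (by nlinarith) hQ2
  have hρ1 : ρ < 1 := by
    rw [hρdef, div_lt_one hQ2]; nlinarith [sq_nonneg (α - β)]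
  set ε : ℝ := (1 - ρ) / 4 with hεdef
  have hε0 : 0 < ε := by rw [hεdef]; linarith
  have hε4 : ε < 1 / 4 := by rw [hεdef]; linarith
  have hRne : (2 : ℝ) * β ≠ 0 := by intro h; nlinarith
  refine ⟨max 2 (ε ^ ((2 * β)⁻¹)), le_max_left _ _, ?_⟩
  intro K hK r hr c c' hcc
  have hK2 : (2 : ℝ) ≤ K := le_trans (le_max_left _ _) hK
  have hK1 : (1 : ℝ) < K := by linarith
  have hK0 : (0 : ℝ) < K := by linarith
  have htε : K ^ (2 * β) ≤ ε := by
    have h1 : ε ^ ((2 * β)⁻¹) ≤ K := le_trans (le_max_right _ _) hK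
    have h2 : K ^ (2 * β) ≤ (ε ^ ((2 * β)⁻¹)) ^ (2 * β) :=
      Real.rpow_le_rpow_of_nonpos (Real.rpow_pos_of_pos hε0 _) h1 (by nlinarith)
    calc K ^ (2 * β) ≤ (ε ^ ((2 * β)⁻¹)) ^ (2 * β) := h2
      _ = ε := by
        rw [← Real.rpow_mul hε0.le, inv_mul_cancel₀ hRne, Real.rpow_one]
  have hPne : (2 : ℝ) * α ≠ 0 := by intro h; nlinarith
  have hQne : α + β ≠ 0 := by intro h; nlinarith
  rw [integral_expand c c' (K * r) K (mul_pos hK0 hr) hK1.le hPne hQne hRne,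
    integral_expand c c' r K hr hK1.le hPne hQne hRne]
  simp only [Real.mul_rpow hK0.le (mul_pos hK0 hr).le, Real.mul_rpow hK0.le hr.le]
  have hcc' : c ≠ 0 ∨ c' ≠ 0 := by
    by_contra h; push_neg at h; exact hcc (by simp [h.1, h.2])
  have hrr : r ^ (2 * α) * r ^ (2 * β) = (r ^ (α + β)) ^ 2 := by
    rw [← Real.rpow_add hr, ← Real.rpow_natCast (r ^ (α + β)), ← Real.rpow_mul hr.le]
    norm_num; ring_nf
  have hkey2 : 4 * (α * β) < (1 - K ^ (2 * β)) ^ 2 * (α + β) ^ 2 := by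
    have ht0 : 0 < K ^ (2 * β) := Real.rpow_pos_of_pos hK0 _
    have hρQ : ρ * (α + β) ^ 2 = 4 * (α * β) := div_mul_cancel₀ _ hQ2.ne'
    have h1t : 1 - ε ≤ 1 - K ^ (2 * β) := by linarith
    have h2 : (1 - ε) ^ 2 ≤ (1 - K ^ (2 * β)) ^ 2 := by nlinarith
    have h3 : ρ < (1 - ε) ^ 2 := by nlinarith [sq_nonneg ε]
    nlinarith [mul_lt_mul_of_pos_right (h3.trans_le h2) hQ2]
  exact core_ineq hα hβ (Real.rpow_pos_of_pos hK0 _)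
    (Real.rpow_lt_rpow_of_exponent_lt hK1 (by nlinarith))
    (Real.rpow_lt_one_of_one_lt_of_neg hK1 (by nlinarith))
    (Real.rpow_pos_of_pos hK0 _)
    (Real.rpow_lt_one_of_one_lt_of_neg hK1 (by nlinarith))
    (Real.rpow_pos_of_pos hr _) (Real.rpow_pos_of_pos hr _) (Real.rpow_pos_of_pos hr _)
    hrr hkey2 hcc'
end

section
/- Let α < β and γ be real numbers with α < γ, let C > 0, and let c, c' ∈ ℝ. Suppose that ∫_r^{2r} (c·t^α + c'·t^β)²·t^{−1} dt ≤ C·r^{2γ} for every r ∈ (0, 1). Then c = 0. -/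
/-!
The measure `dt / t` is dilation invariant, so substituting `t = r s` turns the integral over
`(r, 2r]` into `r ^ (2α) ∫₁² (c s^α + c' r^(β-α) s^β)² s⁻¹ ds`. After dividing by `r ^ (2α)` the
hypothesis bounds this integral by `C r^(2(γ-α))`. As `r → 0⁺` the integral tends, by continuity
in the parameter `r^(β-α) → 0`, to `∫₁² c² s^(2α-1) ds`, and the bound tends to `0`; hence `c = 0`.
-/

open MeasureTheory Set Filter Topology

namespace intervalIntegral

theorem continuous_of_continuousOn_uncurry {X E : Type*} [TopologicalSpace X]
    [NormedAddCommGroup E] [NormedSpace ℝ E] {F : X → ℝ → E} {a b : ℝ} (hab : a ≤ b)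
    (hF : ContinuousOn F.uncurry (univ ×ˢ Icc a b)) :
    Continuous fun x => ∫ s in a..b, F x s := by
  -- clamping the second variable to `[a, b]` makes the integrand jointly continuous
  have hclamp : Continuous (Function.uncurry fun x s => F x (projIcc a b hab s)) :=
    hF.comp_continuous (continuous_fst.prodMk (continuous_subtype_val.comp
      ((continuous_projIcc (h := hab)).comp continuous_snd)))
      fun p => ⟨trivial, (projIcc a b hab p.2).2⟩
  refine (continuous_parametric_intervalIntegral_of_continuous' hclamp a b).congr
    fun x => integral_congr fun s hs => ?_
  rw [uIcc_of_le hab] at hs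
  simp only [projIcc_of_mem hab hs]

theorem integral_mul_inv_comp_mul_left (g : ℝ → ℝ) {r : ℝ} (hr : r ≠ 0)
    (a b : ℝ) : ∫ s in a..b, g (r * s) * s⁻¹ = ∫ t in r * a..r * b, g t * t⁻¹ := by
  have hcomp := integral_comp_mul_left (fun t => g t * t⁻¹) hr (a := a) (b := b)
  rw [smul_eq_mul] at hcomp
  calc ∫ s in a..b, g (r * s) * s⁻¹ = ∫ s in a..b, r * (g (r * s) * (r * s)⁻¹) := by
        congr 1; ext s; field_simp
    _ = _ := by rw [integral_const_mul, hcomp, mul_inv_cancel_left₀ hr]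

end intervalIntegral

theorem tendsto_rpow_nhdsGT_zero_nhds_zero {p : ℝ} (hp : 0 < p) :
    Tendsto (fun r : ℝ => r ^ p) (𝓝[>] 0) (𝓝 0) :=
  ((Real.continuous_rpow_const hp.le).tendsto' 0 0 (Real.zero_rpow hp.ne')).mono_left
    nhdsWithin_le_nhds

theorem setIntegral_Ioc_two_mul_eq_rpow_mul_intervalIntegral (c c' α β : ℝ) {r : ℝ}
    (hr : 0 < r) :
    ∫ t in Ioc r (2 * r), (c * t ^ α + c' * t ^ β) ^ 2 * t⁻¹
      = r ^ (2 * α) * ∫ s in (1 : ℝ)..2, (c * s ^ α + c' * r ^ (β - α) * s ^ β) ^ 2 * s⁻¹ := by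
  have hscale := intervalIntegral.integral_mul_inv_comp_mul_left
    (fun t => (c * t ^ α + c' * t ^ β) ^ 2) hr.ne' 1 2
  rw [mul_one, mul_comm r 2] at hscale
  rw [← intervalIntegral.integral_of_le (by linarith), ← hscale,
    ← intervalIntegral.integral_const_mul]
  refine intervalIntegral.integral_congr fun s hs => ?_
  have hs0 : 0 ≤ s := by rw [uIcc_of_le one_le_two] at hs; linarith [hs.1]
  have hβ : r ^ β = r ^ α * r ^ (β - α) := by rw [← Real.rpow_add hr]; ring_nf
  have h2α : r ^ (2 * α) = (r ^ α) ^ 2 := by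
    rw [mul_comm, ← Real.rpow_mul_natCast hr.le]; norm_num
  simp only [Real.mul_rpow hr.le hs0, hβ, h2α]
  ring

theorem coefficient_vanishing_general
    (α β γ C : ℝ) (hαβ : α < β) (hαγ : α < γ) (c c' : ℝ)
    (h : ∀ r ∈ Ioo (0 : ℝ) 1,
      (∫ t in Ioc r (2 * r), (c * t ^ α + c' * t ^ β) ^ 2 * t⁻¹)
        ≤ C * r ^ (2 * γ)) :
    c = 0 := by
  set F : ℝ → ℝ → ℝ := fun x s => (c * s ^ α + c' * x * s ^ β) ^ 2 * s⁻¹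
  set I : ℝ → ℝ := fun x => ∫ s in (1 : ℝ)..2, F x s
  have hF : ContinuousOn F.uncurry (univ ×ˢ Icc 1 2) := by
    rintro ⟨x, s⟩ ⟨-, hs⟩
    have hs0 : s ≠ 0 := by linarith [hs.1]
    exact ContinuousAt.continuousWithinAt (by fun_prop (disch := simp [hs0]))
  have hI : Continuous I := intervalIntegral.continuous_of_continuousOn_uncurry one_le_two hF
  have hbound : ∀ r ∈ Ioo (0 : ℝ) 1, I (r ^ (β - α)) ≤ C * r ^ (2 * (γ - α)) := by
    intro r hr
    have hsplit : C * r ^ (2 * γ) = r ^ (2 * α) * (C * r ^ (2 * (γ - α))) := by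
      rw [mul_left_comm, ← Real.rpow_add hr.1]; ring_nf
    have hr' := h r hr
    rw [setIntegral_Ioc_two_mul_eq_rpow_mul_intervalIntegral c c' α β hr.1, hsplit] at hr'
    exact le_of_mul_le_mul_left hr' (Real.rpow_pos_of_pos hr.1 _)
  have hI0 : I 0 ≤ 0 := by
    refine le_of_tendsto_of_tendsto ((hI.tendsto 0).comp
      (tendsto_rpow_nhdsGT_zero_nhds_zero (sub_pos.2 hαβ))) ?_
      (Filter.eventually_of_mem (Ioo_mem_nhdsGT one_pos) hbound)
    simpa using (tendsto_rpow_nhdsGT_zero_nhds_zero (by linarith : 0 < 2 * (γ - α))).const_mul C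
  by_contra hc
  have hI0_pos : 0 < I 0 := by
    have hF0 : ContinuousOn (F 0) (Icc 1 2) :=
      hF.comp (f := fun s => ((0 : ℝ), s)) (by fun_prop) fun s hs => ⟨trivial, hs⟩
    refine intervalIntegral.intervalIntegral_pos_of_pos_on
      (hF0.intervalIntegrable_of_Icc one_le_two) (fun s hs => ?_) one_lt_two
    have hs0 : 0 < s := by linarith [hs.1]
    simp only [F, mul_zero, zero_mul, add_zero]
    positivity
  linarith

/-- Coefficient vanishing (behind Lemma 2.6): if `α < β`, `α < γ`, `C > 0` and
`∫_r^{2r} (c t^α + c' t^β)² t⁻¹ dt ≤ C r^{2γ}` for all `r ∈ (0,1)`, then `c = 0`. -/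
theorem coefficient_vanishing
    (α β γ C : ℝ) (hαβ : α < β) (hαγ : α < γ) (hC : 0 < C) (c c' : ℝ)
    (h : ∀ r ∈ Ioo (0 : ℝ) 1,
      (∫ t in Ioc r (2 * r), (c * t ^ α + c' * t ^ β) ^ 2 * t⁻¹)
        ≤ C * r ^ (2 * γ)) :
    c = 0 :=
  coefficient_vanishing_general α β γ C hαβ hαγ c c' h
end
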